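/- arXiv:1810.03389 — 4 statements merged into one kernel-verified Lean document; each statement's English description precedes it below -/
import Mathlib

section
/- For a multi-channel convolution kernel w : C_out × C_in × ℤ^d → ℝ mapping x : ℤ^d × C_in → ℝ to (w∗x)(u, j) = Σ_{v,i} x(v,i)·w(j,i,u−v), one has ‖w∗x‖₂ ≤ √(‖w‖₁ · ‖w‖_{∞,∞,1}) · ‖x‖₂, where ‖w‖_{∞,∞,1} = max_{i,j} Σ_u |w(j,i,u)| and ‖w‖₁ = Σ_{j,i,u} |w(j,i,u)|. -/
open Finset Pointwise

/-- **Multi-channel convolution bound**: for a kernel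
`w : C_out × C_in × ℤ^d → ℝ` with finitely supported spatial kernels, and input
`x : ℤ^d × C_in → ℝ` finitely supported in each channel,
`‖w ∗ x‖₂ ≤ √(‖w‖₁ · ‖w‖_{∞,∞,1}) · ‖x‖₂`, where
`‖w‖_{∞,∞,1} = max_{i,j} ∑_u |w(j,i,u)|` and `‖w‖₁ = ∑_{j,i,u} |w(j,i,u)|`. -/
theorem multichannel_conv_bound
    (d : ℕ) (Cout Cin : Type*) [Fintype Cout] [Fintype Cin]
    [Nonempty Cout] [Nonempty Cin]
    (w : Cout → Cin → (Fin d → ℤ) → ℝ) (x : (Fin d → ℤ) → Cin → ℝ)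
    (hw : ∀ j i, (Function.support (w j i)).Finite)
    (hx : ∀ i, (Function.support fun v => x v i).Finite) :
    Real.sqrt (∑' u : Fin d → ℤ, ∑ j : Cout,
        (∑ᶠ v : Fin d → ℤ, ∑ i : Cin, x v i * w j i (u - v)) ^ 2)
      ≤ Real.sqrt ((∑ j : Cout, ∑ i : Cin, ∑' u : Fin d → ℤ, |w j i u|) *
          (⨆ j : Cout, ⨆ i : Cin, ∑' u : Fin d → ℤ, |w j i u|)) *
        Real.sqrt (∑' v : Fin d → ℤ, ∑ i : Cin, (x v i) ^ 2) := by
  classical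
  set Sw : Finset (Fin d → ℤ) :=
    Finset.univ.biUnion (fun p : Cout × Cin => (hw p.1 p.2).toFinset) with hSwdef
  set Sx : Finset (Fin d → ℤ) :=
    Finset.univ.biUnion (fun i : Cin => (hx i).toFinset) with hSxdef
  have hwS : ∀ j i t, t ∉ Sw → w j i t = 0 := by
    intro j i t ht
    by_contra h
    exact ht (Finset.mem_biUnion.2 ⟨(j, i), Finset.mem_univ _, (hw j i).mem_toFinset.2 h⟩)
  have hxS : ∀ i v, v ∉ Sx → x v i = 0 := by
    intro i v hv
    by_contra h
    exact hv (Finset.mem_biUnion.2 ⟨i, Finset.mem_univ _, (hx i).mem_toFinset.2 h⟩)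
  set Sy : Finset (Fin d → ℤ) := Sx + Sw with hSydef
  -- abbreviations
  set N : Cout → Cin → ℝ := fun j i => ∑ t ∈ Sw, |w j i t| with hN
  have hNnonneg : ∀ j i, 0 ≤ N j i := fun j i =>
    Finset.sum_nonneg fun t _ => abs_nonneg _
  -- rewrite tsums as finite sums
  have tsum_w : ∀ j i, ∑' u : Fin d → ℤ, |w j i u| = N j i := fun j i =>
    tsum_eq_sum (fun t ht => by rw [hwS j i t ht, abs_zero])
  have tsum_x : ∑' v : Fin d → ℤ, ∑ i : Cin, (x v i) ^ 2
      = ∑ v ∈ Sx, ∑ i : Cin, (x v i) ^ 2 :=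
    tsum_eq_sum (fun v hv => Finset.sum_eq_zero fun i _ => by
      rw [hxS i v hv]; ring)
  -- finsum rewrite
  have finsum_y : ∀ (u : Fin d → ℤ) (j : Cout),
      (∑ᶠ v : Fin d → ℤ, ∑ i : Cin, x v i * w j i (u - v))
        = ∑ v ∈ Sx, ∑ i : Cin, x v i * w j i (u - v) := by
    intro u j
    refine finsum_eq_sum_of_support_subset _ ?_
    intro v hv
    by_contra hvs
    apply hv
    exact Finset.sum_eq_zero fun i _ => by rw [hxS i v hvs]; ring
  have tsum_y : ∑' u : Fin d → ℤ, ∑ j : Cout,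
        (∑ᶠ v : Fin d → ℤ, ∑ i : Cin, x v i * w j i (u - v)) ^ 2
      = ∑ u ∈ Sy, ∑ j : Cout,
        (∑ v ∈ Sx, ∑ i : Cin, x v i * w j i (u - v)) ^ 2 := by
    rw [tsum_eq_sum (s := Sy) ?h]
    · exact Finset.sum_congr rfl fun u _ => Finset.sum_congr rfl fun j _ => by
        rw [finsum_y]
    case h =>
      intro u hu
      refine Finset.sum_eq_zero fun j _ => ?_
      rw [finsum_y]
      have : (∑ v ∈ Sx, ∑ i : Cin, x v i * w j i (u - v)) = 0 := by
        refine Finset.sum_eq_zero fun v hv => Finset.sum_eq_zero fun i _ => ?_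
        rcases eq_or_ne (w j i (u - v)) 0 with h | h
        · rw [h]; ring
        · exfalso
          apply hu
          have hwmem : u - v ∈ Sw := by
            by_contra hc
            exact h (hwS j i _ hc)
          rw [hSydef]
          simpa using Finset.add_mem_add hv hwmem
      rw [this]; ring
  -- the sup and its bounds
  have hNM : ∀ j i, N j i ≤ ⨆ j' : Cout, ⨆ i' : Cin, N j' i' := by
    intro j i
    refine le_trans (le_ciSup (f := fun i' => N j i')
      (Set.Finite.bddAbove (Set.finite_range _)) i) ?_
    exact le_ciSup (f := fun j' => ⨆ i' : Cin, N j' i')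
      (Set.Finite.bddAbove (Set.finite_range _)) j
  set M : ℝ := ⨆ j : Cout, ⨆ i : Cin, N j i with hM
  have hM0 : 0 ≤ M := le_trans (hNnonneg (Classical.arbitrary _) (Classical.arbitrary _)) (hNM _ _)
  set W : ℝ := ∑ j : Cout, ∑ i : Cin, N j i with hW
  have hW0 : 0 ≤ W :=
    Finset.sum_nonneg fun j _ => Finset.sum_nonneg fun i _ => hNnonneg j i
  set C : ℝ := ∑ v ∈ Sx, ∑ i : Cin, (x v i) ^ 2 with hC
  -- shifted sums of |w| are bounded by N
  have shift : ∀ (j : Cout) (i : Cin) (S : Finset (Fin d → ℤ))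
      (f : (Fin d → ℤ) → (Fin d → ℤ)), Function.Injective f →
      (∑ v ∈ S, |w j i (f v)|) ≤ N j i := by
    intro j i S f hf
    have h1 : (∑ v ∈ S.filter (fun v => f v ∈ Sw), |w j i (f v)|)
        = ∑ v ∈ S, |w j i (f v)| := by
      refine Finset.sum_filter_of_ne fun v _ hne => ?_
      by_contra hc
      exact hne (by rw [hwS j i _ hc, abs_zero])
    have h2 : (∑ t ∈ (S.filter (fun v => f v ∈ Sw)).image f, |w j i t|)
        = ∑ v ∈ S.filter (fun v => f v ∈ Sw), |w j i (f v)| :=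
      Finset.sum_image fun a _ b _ h => hf h
    have h3 : (S.filter (fun v => f v ∈ Sw)).image f ⊆ Sw := by
      intro t ht
      obtain ⟨v, hv, rfl⟩ := Finset.mem_image.1 ht
      exact (Finset.mem_filter.1 hv).2
    calc ∑ v ∈ S, |w j i (f v)| = _ := h1.symm
      _ = _ := h2.symm
      _ ≤ N j i :=
        Finset.sum_le_sum_of_subset_of_nonneg h3 fun t _ _ => abs_nonneg _
  -- Cauchy-Schwarz pointwise
  have CS : ∀ (u : Fin d → ℤ) (j : Cout),
      (∑ v ∈ Sx, ∑ i : Cin, x v i * w j i (u - v)) ^ 2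
        ≤ (∑ v ∈ Sx, ∑ i : Cin, (x v i) ^ 2 * |w j i (u - v)|) *
          (∑ v ∈ Sx, ∑ i : Cin, |w j i (u - v)|) := by
    intro u j
    have sq_sign : ∀ s : ℝ, (Real.sign s * Real.sqrt |s|) ^ 2 = |s| := by
      intro s
      rcases lt_trichotomy s 0 with h | h | h
      · rw [Real.sign_of_neg h, neg_one_mul, neg_sq]
        exact Real.sq_sqrt (abs_nonneg s)
      · simp [h]
      · rw [Real.sign_of_pos h, one_mul]
        exact Real.sq_sqrt (abs_nonneg s)
    have sign_abs : ∀ s : ℝ, Real.sign s * |s| = s := by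
      intro s
      rcases lt_trichotomy s 0 with h | h | h
      · rw [Real.sign_of_neg h, abs_of_neg h]; ring
      · simp [h]
      · rw [Real.sign_of_pos h, abs_of_pos h]; ring
    have key := Finset.sum_mul_sq_le_sq_mul_sq (Sx ×ˢ (Finset.univ : Finset Cin))
      (fun p => x p.1 p.2 * Real.sqrt |w j p.2 (u - p.1)|)
      (fun p => Real.sign (w j p.2 (u - p.1)) * Real.sqrt |w j p.2 (u - p.1)|)
    have e1 : (∑ p ∈ Sx ×ˢ (Finset.univ : Finset Cin),
        (x p.1 p.2 * Real.sqrt |w j p.2 (u - p.1)|) *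
        (Real.sign (w j p.2 (u - p.1)) * Real.sqrt |w j p.2 (u - p.1)|))
        = ∑ v ∈ Sx, ∑ i : Cin, x v i * w j i (u - v) := by
      rw [Finset.sum_product]
      refine Finset.sum_congr rfl fun v _ => Finset.sum_congr rfl fun i _ => ?_
      have : x v i * Real.sqrt |w j i (u - v)| *
          (Real.sign (w j i (u - v)) * Real.sqrt |w j i (u - v)|)
          = x v i * (Real.sign (w j i (u - v)) *
            (Real.sqrt |w j i (u - v)| * Real.sqrt |w j i (u - v)|)) := by ring
      rw [this, Real.mul_self_sqrt (abs_nonneg _), sign_abs]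
    have e2 : (∑ p ∈ Sx ×ˢ (Finset.univ : Finset Cin),
        (x p.1 p.2 * Real.sqrt |w j p.2 (u - p.1)|) ^ 2)
        = ∑ v ∈ Sx, ∑ i : Cin, (x v i) ^ 2 * |w j i (u - v)| := by
      rw [Finset.sum_product]
      refine Finset.sum_congr rfl fun v _ => Finset.sum_congr rfl fun i _ => ?_
      rw [mul_pow, Real.sq_sqrt (abs_nonneg _)]
    have e3 : (∑ p ∈ Sx ×ˢ (Finset.univ : Finset Cin),
        (Real.sign (w j p.2 (u - p.1)) * Real.sqrt |w j p.2 (u - p.1)|) ^ 2)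
        = ∑ v ∈ Sx, ∑ i : Cin, |w j i (u - v)| := by
      rw [Finset.sum_product]
      exact Finset.sum_congr rfl fun v _ => Finset.sum_congr rfl fun i _ =>
        sq_sign _
    rw [e1, e2, e3] at key
    exact key
  -- bound on the second CS factor
  have hQ : ∀ (u : Fin d → ℤ) (j : Cout),
      (∑ v ∈ Sx, ∑ i : Cin, |w j i (u - v)|) ≤ ∑ i : Cin, N j i := by
    intro u j
    rw [Finset.sum_comm]
    refine Finset.sum_le_sum fun i _ => ?_
    refine shift j i Sx (fun v => u - v) ?_
    intro a b h
    have : u - (u - a) = u - (u - b) := congrArg (fun t => u - t) h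
    simpa using this
  have hPnn : ∀ (u : Fin d → ℤ) (j : Cout),
      0 ≤ ∑ v ∈ Sx, ∑ i : Cin, (x v i) ^ 2 * |w j i (u - v)| := by
    intro u j
    exact Finset.sum_nonneg fun v _ => Finset.sum_nonneg fun i _ =>
      mul_nonneg (sq_nonneg _) (abs_nonneg _)
  -- bound on summed first CS factor
  have hP : ∀ j : Cout,
      (∑ u ∈ Sy, ∑ v ∈ Sx, ∑ i : Cin, (x v i) ^ 2 * |w j i (u - v)|)
        ≤ C * M := by
    intro j
    have hswap : (∑ u ∈ Sy, ∑ v ∈ Sx, ∑ i : Cin, (x v i) ^ 2 * |w j i (u - v)|)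
        = ∑ v ∈ Sx, ∑ i : Cin, (x v i) ^ 2 * ∑ u ∈ Sy, |w j i (u - v)| := by
      rw [Finset.sum_comm]
      refine Finset.sum_congr rfl fun v _ => ?_
      rw [Finset.sum_comm]
      exact Finset.sum_congr rfl fun i _ => (Finset.mul_sum _ _ _).symm
    rw [hswap, hC, Finset.sum_mul]
    refine Finset.sum_le_sum fun v _ => ?_
    rw [Finset.sum_mul]
    refine Finset.sum_le_sum fun i _ => ?_
    have hsh : (∑ u ∈ Sy, |w j i (u - v)|) ≤ N j i := by
      refine shift j i Sy (fun u => u - v) ?_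
      intro a b h
      have : (a - v) + v = (b - v) + v := congrArg (fun t => t + v) h
      simpa using this
    calc (x v i) ^ 2 * ∑ u ∈ Sy, |w j i (u - v)|
        ≤ (x v i) ^ 2 * N j i := mul_le_mul_of_nonneg_left hsh (sq_nonneg _)
      _ ≤ (x v i) ^ 2 * M := mul_le_mul_of_nonneg_left (hNM j i) (sq_nonneg _)
  -- main inequality between finite sums
  have main : (∑ u ∈ Sy, ∑ j : Cout,
      (∑ v ∈ Sx, ∑ i : Cin, x v i * w j i (u - v)) ^ 2) ≤ W * M * C := by
    have step1 : (∑ u ∈ Sy, ∑ j : Cout,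
        (∑ v ∈ Sx, ∑ i : Cin, x v i * w j i (u - v)) ^ 2)
        ≤ ∑ u ∈ Sy, ∑ j : Cout,
          (∑ v ∈ Sx, ∑ i : Cin, (x v i) ^ 2 * |w j i (u - v)|) * (∑ i : Cin, N j i) := by
      refine Finset.sum_le_sum fun u _ => Finset.sum_le_sum fun j _ => ?_
      exact le_trans (CS u j) (mul_le_mul_of_nonneg_left (hQ u j) (hPnn u j))
    have step2 : (∑ u ∈ Sy, ∑ j : Cout,
        (∑ v ∈ Sx, ∑ i : Cin, (x v i) ^ 2 * |w j i (u - v)|) * (∑ i : Cin, N j i))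
        = ∑ j : Cout, (∑ u ∈ Sy, ∑ v ∈ Sx, ∑ i : Cin,
            (x v i) ^ 2 * |w j i (u - v)|) * (∑ i : Cin, N j i) := by
      rw [Finset.sum_comm]
      exact Finset.sum_congr rfl fun j _ => (Finset.sum_mul _ _ _).symm
    have step3 : (∑ j : Cout, (∑ u ∈ Sy, ∑ v ∈ Sx, ∑ i : Cin,
            (x v i) ^ 2 * |w j i (u - v)|) * (∑ i : Cin, N j i))
        ≤ ∑ j : Cout, (C * M) * (∑ i : Cin, N j i) := by
      refine Finset.sum_le_sum fun j _ => ?_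
      exact mul_le_mul_of_nonneg_right (hP j)
        (Finset.sum_nonneg fun i _ => hNnonneg j i)
    have step4 : (∑ j : Cout, (C * M) * (∑ i : Cin, N j i)) = W * M * C := by
      rw [← Finset.mul_sum, ← hW]; ring
    calc _ ≤ _ := step1
      _ = _ := step2
      _ ≤ _ := step3
      _ = W * M * C := step4
  -- conclude
  rw [tsum_y, tsum_x]
  simp only [tsum_w]
  rw [← Real.sqrt_mul (mul_nonneg hW0 hM0) C]
  exact Real.sqrt_le_sqrt main
end

section
/- For the multi-channel strided convolution with stride S ≥ 1 and kernel size Size = (Size_1,…,Size_d), letting D = Π_i ⌈Size_i / S⌉, the strided output satisfies ‖w∗_S x‖₂ ≤ √(D · ‖w‖₁ · ‖w‖_∞) · ‖x‖₂, where ‖w‖_∞ = max_{j,i,u} |w(j,i,u)|. -/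
open Finset

/-!
For a fixed output channel `j`, the strided convolution is the matrix
`(t, (v, i)) ↦ w j i (S t - v)` applied to `x`, and Schur's test bounds its squared operator norm
by the product of the largest row and column `ℓ¹` sums. A row sum is at most
`∑ i, ‖w j i‖₁`, since `v ↦ S t - v` is injective. A column sum has at most `D` nonzero
terms, because `S t_k` must lie in a window of length `Size k`, which contains at most
`⌈Size k / S⌉` multiples of `S`; so it is at most `D ‖w‖_∞`. Summing over `j` gives the bound.
-/

theorem sq_sum_mul_le_sum_mul_sq_abs_mul_sum_abs {ι : Type*} (s : Finset ι) (x k : ι → ℝ) :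
    (∑ c ∈ s, x c * k c) ^ 2 ≤ (∑ c ∈ s, x c ^ 2 * |k c|) * ∑ c ∈ s, |k c| :=
  sum_sq_le_sum_mul_sum_of_sq_le_mul s (fun _ _ => by positivity) (fun _ _ => abs_nonneg _)
    fun c _ => (by rw [mul_pow, ← sq_abs (k c)]; ring : _ = _).le

theorem schur_test_sum_sq {ρ γ : Type*} (R : Finset ρ) (C : Finset γ) (K : ρ → γ → ℝ)
    (x : γ → ℝ) {A B : ℝ} (hA₀ : 0 ≤ A) (hA : ∀ r ∈ R, ∑ c ∈ C, |K r c| ≤ A)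
    (hB : ∀ c ∈ C, ∑ r ∈ R, |K r c| ≤ B) :
    ∑ r ∈ R, (∑ c ∈ C, x c * K r c) ^ 2 ≤ A * B * ∑ c ∈ C, x c ^ 2 :=
  calc ∑ r ∈ R, (∑ c ∈ C, x c * K r c) ^ 2
      ≤ ∑ r ∈ R, A * ∑ c ∈ C, x c ^ 2 * |K r c| := by
        gcongr with r hr
        grw [sq_sum_mul_le_sum_mul_sq_abs_mul_sum_abs, hA r hr, mul_comm]
    _ = A * ∑ c ∈ C, x c ^ 2 * ∑ r ∈ R, |K r c| := by
        rw [← mul_sum, sum_comm]; simp only [mul_sum]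
    _ ≤ A * ∑ c ∈ C, x c ^ 2 * B := by gcongr with c hc; exact hB c hc
    _ = A * B * ∑ c ∈ C, x c ^ 2 := by rw [← sum_mul, mul_comm _ B, mul_assoc]

theorem Summable.sum_comp_sub_le_tsum {G : Type*} [AddGroup G] {f : G → ℝ} (hs : Summable f)
    (hf : ∀ u, 0 ≤ f u) (X : Finset G) (a : G) : ∑ v ∈ X, f (a - v) ≤ ∑' u, f u := by
  rw [← (Equiv.subLeft a).tsum_eq f]
  exact Summable.sum_le_tsum X (fun _ _ => hf _) ((Equiv.subLeft a).summable_iff.2 hs)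

theorem le_ciSup_ciSup_ciSup {α β γ : Type*} [Finite α] [Finite β] {f : α → β → γ → ℝ}
    (hf : ∀ a b, BddAbove (Set.range (f a b))) (a : α) (b : β) (c : γ) :
    f a b c ≤ ⨆ a, ⨆ b, ⨆ c, f a b c :=
  calc f a b c ≤ ⨆ c, f a b c := le_ciSup (hf a b) c
    _ ≤ ⨆ b, ⨆ c, f a b c := le_ciSup (Set.finite_range fun b => ⨆ c, f a b c).bddAbove b
    _ ≤ ⨆ a, ⨆ b, ⨆ c, f a b c := le_ciSup (Set.finite_range fun a => ⨆ b, ⨆ c, f a b c).bddAbove a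

/-- For `0 < S`, `-(-a / S)` is `⌈a / S⌉`. -/
theorem Int.mem_Icc_ediv_of_le_mul_lt {S : ℤ} (hS : 0 < S) {a n t : ℤ}
    (h₁ : a ≤ S * t) (h₂ : S * t < a + n) :
    t ∈ Icc (-(-a / S)) ((a + n - 1) / S) := by
  rw [mem_Icc, neg_le, Int.le_ediv_iff_mul_le hS, Int.le_ediv_iff_mul_le hS]
  constructor <;> linarith

theorem Int.card_Icc_ediv_le {S : ℕ} (hS : 0 < S) (a : ℤ) (n : ℕ) :
    #(Icc (-(-a / S)) ((a + n - 1) / S)) ≤ (n + S - 1) / S := by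
  have hS₀ : (0 : ℤ) < S := by exact_mod_cast hS
  rw [Int.card_Icc, Int.toNat_le, Int.natCast_ediv, Nat.cast_sub (by omega)]
  push_cast
  have hsuper : (a + n - 1) / (S : ℤ) + -a / S ≤ (n - 1) / S := by
    rw [Int.le_ediv_iff_mul_le hS₀, add_mul]
    linarith [Int.ediv_mul_le (a + n - 1) hS₀.ne', Int.ediv_mul_le (-a) hS₀.ne']
  have hshift : ((n : ℤ) + S - 1) / S = (n - 1) / S + 1 := by
    rw [← Int.add_mul_ediv_right _ 1 hS₀.ne']; ring_nf
  omega

theorem card_filter_stride_sub_mem_box_le {ι : Type*} [Fintype ι] [DecidableEq ι] {S : ℕ}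
    (hS : 0 < S) (n : ι → ℕ) (v : ι → ℤ) (T : Finset (ι → ℤ)) :
    #{t ∈ T | ∀ k, 0 ≤ S * t k - v k ∧ S * t k - v k < n k} ≤ ∏ k, (n k + S - 1) / S :=
  calc #{t ∈ T | ∀ k, 0 ≤ S * t k - v k ∧ S * t k - v k < n k}
      ≤ #(Icc (fun k => -(-v k / S)) (fun k => (v k + n k - 1) / S)) :=
        card_le_card fun t ht => by
          have hwin := (mem_filter.1 ht).2
          have hmem k := Int.mem_Icc_ediv_of_le_mul_lt (S := S) (a := v k) (n := n k) (t := t k)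
            (by exact_mod_cast hS) (by linarith [(hwin k).1]) (by linarith [(hwin k).2])
          simp only [mem_Icc] at hmem ⊢
          exact ⟨fun k => (hmem k).1, fun k => (hmem k).2⟩
    _ = ∏ k, #(Icc (-(-v k / S)) ((v k + n k - 1) / S)) := Pi.card_Icc _ _
    _ ≤ ∏ k, (n k + S - 1) / S := prod_le_prod' fun k _ => Int.card_Icc_ediv_le hS (v k) (n k)

theorem sum_abs_comp_stride_sub_le {ι : Type*} [Fintype ι] [DecidableEq ι] {S : ℕ} (hS : 0 < S)
    {n : ι → ℕ} {f : (ι → ℤ) → ℝ} {M : ℝ}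
    (hbox : ∀ u, f u ≠ 0 → ∀ k, 0 ≤ u k ∧ u k < (n k : ℤ)) (hM : ∀ u, |f u| ≤ M)
    (T : Finset (ι → ℤ)) (v : ι → ℤ) :
    ∑ t ∈ T, |f ((fun k => (S : ℤ) * t k) - v)| ≤ (∏ k, (n k + S - 1) / S : ℕ) * M := by
  have hM₀ : 0 ≤ M := (abs_nonneg _).trans (hM 0)
  have hsupp : {t ∈ T | |f ((fun k => (S : ℤ) * t k) - v)| ≠ 0} ⊆
      {t ∈ T | ∀ k, 0 ≤ S * t k - v k ∧ S * t k - v k < n k} :=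
    monotone_filter_right _ fun t _ ht => hbox _ (abs_ne_zero.1 ht)
  calc ∑ t ∈ T, |f ((fun k => (S : ℤ) * t k) - v)|
      = ∑ t ∈ T with |f ((fun k => (S : ℤ) * t k) - v)| ≠ 0,
          |f ((fun k => (S : ℤ) * t k) - v)| := (sum_filter_ne_zero _).symm
    _ ≤ #{t ∈ T | |f ((fun k => (S : ℤ) * t k) - v)| ≠ 0} * M := by
        rw [← nsmul_eq_mul]; exact sum_le_card_nsmul _ _ _ fun t _ => hM _
    _ ≤ (∏ k, (n k + S - 1) / S : ℕ) * M := by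
        gcongr
        exact_mod_cast (card_le_card hsupp).trans (card_filter_stride_sub_mem_box_le hS n v T)

theorem summable_of_ne_zero_mem_box {ι : Type*} [Fintype ι] [DecidableEq ι] {n : ι → ℕ}
    {f : (ι → ℤ) → ℝ} (hbox : ∀ u, f u ≠ 0 → ∀ k, 0 ≤ u k ∧ u k < (n k : ℤ)) : Summable f :=
  summable_of_hasFiniteSupport <| (Fintype.piFinset fun k => Ico (0 : ℤ) (n k)).finite_toSet.subset
    fun u hu => by simpa using hbox u hu

theorem sum_sq_strided_conv_le {ι Cin : Type*} [Fintype ι] [DecidableEq ι] [Fintype Cin] {S : ℕ}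
    (hS : 0 < S) {n : ι → ℕ} {w : Cin → (ι → ℤ) → ℝ} {M : ℝ}
    (hbox : ∀ i u, w i u ≠ 0 → ∀ k, 0 ≤ u k ∧ u k < (n k : ℤ)) (hM : ∀ i u, |w i u| ≤ M)
    (x : (ι → ℤ) → Cin → ℝ) (T X : Finset (ι → ℤ)) :
    ∑ t ∈ T, (∑ v ∈ X, ∑ i, x v i * w i ((fun k => (S : ℤ) * t k) - v)) ^ 2 ≤
      (∏ k, (n k + S - 1) / S : ℕ) * (∑ i, ∑' u, |w i u|) * M * ∑ v ∈ X, ∑ i, x v i ^ 2 := by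
  have hrow (t : ι → ℤ) : ∑ c ∈ X ×ˢ univ, |w c.2 ((fun k => (S : ℤ) * t k) - c.1)| ≤
      ∑ i, ∑' u, |w i u| := by
    rw [sum_product, sum_comm]
    exact sum_le_sum fun i _ => (summable_of_ne_zero_mem_box (hbox i)).abs.sum_comp_sub_le_tsum
      (fun _ => abs_nonneg _) X _
  have hcol (c : (ι → ℤ) × Cin) : ∑ t ∈ T, |w c.2 ((fun k => (S : ℤ) * t k) - c.1)| ≤
      (∏ k, (n k + S - 1) / S : ℕ) * M :=
    sum_abs_comp_stride_sub_le hS (hbox c.2) (hM c.2) T c.1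
  have := schur_test_sum_sq T (X ×ˢ univ) (fun t c => w c.2 ((fun k => (S : ℤ) * t k) - c.1))
    (fun c => x c.1 c.2) (by positivity) (fun t _ => hrow t) (fun c _ => hcol c)
  simp only [sum_product] at this
  linarith

theorem strided_multichannel_conv_bound_general
    (d : ℕ) (Cout Cin : Type*) [Fintype Cout] [Fintype Cin]
    (S : ℕ) (hS : 1 ≤ S) (Size : Fin d → ℕ)
    (w : Cout → Cin → (Fin d → ℤ) → ℝ) (x : (Fin d → ℤ) → Cin → ℝ)
    (hbox : ∀ j i (u : Fin d → ℤ), w j i u ≠ 0 → ∀ k, 0 ≤ u k ∧ u k < (Size k : ℤ))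
    (hx : ∀ i, (Function.support fun v => x v i).Finite) :
    Real.sqrt (∑' t : Fin d → ℤ, ∑ j : Cout,
        (∑ᶠ v : Fin d → ℤ, ∑ i : Cin,
          x v i * w j i ((fun k => (S : ℤ) * t k) - v)) ^ 2)
      ≤ Real.sqrt (((∏ k : Fin d, ((Size k + S - 1) / S) : ℕ) : ℝ) *
          (∑ j : Cout, ∑ i : Cin, ∑' u : Fin d → ℤ, |w j i u|) *
          (⨆ j : Cout, ⨆ i : Cin, ⨆ u : Fin d → ℤ, |w j i u|)) *
        Real.sqrt (∑' v : Fin d → ℤ, ∑ i : Cin, (x v i) ^ 2) := by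
  have hM : ∀ j i u, |w j i u| ≤ ⨆ j, ⨆ i, ⨆ u, |w j i u| := le_ciSup_ciSup_ciSup fun j i =>
    ⟨_, Set.forall_mem_range.2 fun u =>
      (summable_of_ne_zero_mem_box (hbox j i)).abs.le_tsum u fun _ _ => abs_nonneg _⟩
  have hM₀ : 0 ≤ ⨆ j, ⨆ i, ⨆ u, |w j i u| :=
    Real.iSup_nonneg fun _ => Real.iSup_nonneg fun _ => Real.iSup_nonneg fun _ => abs_nonneg _
  obtain ⟨X, hX⟩ : ∃ X : Finset (Fin d → ℤ), ∀ v i, x v i ≠ 0 → v ∈ X :=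
    ⟨(Set.finite_iUnion hx).toFinset, fun v i h => by simpa using ⟨i, h⟩⟩
  have hconv (t : Fin d → ℤ) j : ∑ᶠ v, ∑ i, x v i * w j i ((fun k => (S : ℤ) * t k) - v) =
      ∑ v ∈ X, ∑ i, x v i * w j i ((fun k => (S : ℤ) * t k) - v) :=
    finsum_eq_sum_of_support_subset _ fun v hv => by
      obtain ⟨i, -, hi⟩ := exists_ne_zero_of_sum_ne_zero hv
      exact hX v i (left_ne_zero_of_mul hi)
  have hnorm : ∑' v, ∑ i, x v i ^ 2 = ∑ v ∈ X, ∑ i, x v i ^ 2 :=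
    tsum_eq_sum fun v hv => sum_eq_zero fun i _ => by simpa using mt (hX v i) hv
  rw [← Real.sqrt_mul (by positivity), hnorm]
  refine Real.sqrt_le_sqrt (tsum_le_of_sum_le' (by positivity) fun T => ?_)
  simp only [hconv]
  rw [sum_comm]
  refine (sum_le_sum fun j _ => sum_sq_strided_conv_le hS (hbox j) (hM j) x T X).trans_eq ?_
  rw [← sum_mul, ← sum_mul, ← mul_sum]

/-- **Strided multi-channel convolution bound**: for stride `S ≥ 1` and kernel
supported in a box of size `Size`, with `D = ∏ k ⌈Size k / S⌉`, the strided
convolution output satisfies `‖w ∗_S x‖₂ ≤ √(D · ‖w‖₁ · ‖w‖_∞) · ‖x‖₂`,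
where `‖w‖_∞ = max_{j,i,u} |w(j,i,u)|`. -/
theorem strided_multichannel_conv_bound
    (d : ℕ) (Cout Cin : Type*) [Fintype Cout] [Fintype Cin]
    [Nonempty Cout] [Nonempty Cin]
    (S : ℕ) (hS : 1 ≤ S) (Size : Fin d → ℕ)
    (w : Cout → Cin → (Fin d → ℤ) → ℝ) (x : (Fin d → ℤ) → Cin → ℝ)
    (hbox : ∀ j i (u : Fin d → ℤ), w j i u ≠ 0 → ∀ k, 0 ≤ u k ∧ u k < (Size k : ℤ))
    (hx : ∀ i, (Function.support fun v => x v i).Finite) :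
    Real.sqrt (∑' t : Fin d → ℤ, ∑ j : Cout,
        (∑ᶠ v : Fin d → ℤ, ∑ i : Cin,
          x v i * w j i ((fun k => (S : ℤ) * t k) - v)) ^ 2)
      ≤ Real.sqrt (((∏ k : Fin d, ((Size k + S - 1) / S) : ℕ) : ℝ) *
          (∑ j : Cout, ∑ i : Cin, ∑' u : Fin d → ℤ, |w j i u|) *
          (⨆ j : Cout, ⨆ i : Cin, ⨆ u : Fin d → ℤ, |w j i u|)) *
        Real.sqrt (∑' v : Fin d → ℤ, ∑ i : Cin, (x v i) ^ 2) :=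
  strided_multichannel_conv_bound_general d Cout Cin S hS Size w x hbox hx
end

section
/- (Rademacher complexity of a max over classes) Let F₁,…,F_m be classes of functions f : X → ℝ and M = { x ↦ max(f₁(x),…,f_m(x)) : f_i ∈ F_i }. Then the Rademacher complexity satisfies R_n(M) ≤ Σ_{i=1}^m R_n(F_i). -/
/-!
Write `max u v = (u + v + |v - u|) / 2`. The Rademacher sum of a class is positively
homogeneous, subadditive and invariant under `f ↦ -f`, and by the contraction principle it does
not increase when a 1-Lipschitz map such as `|·|` is applied coordinatewise; together these give
`R(max U V) ≤ R(U) + R(V)` for two bounded classes, and induction on the number of classes does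
the rest. The contraction principle is proved one coordinate at a time: pairing each sign vector
with the one flipped at that coordinate reduces it to an inequality between two suprema. The
bound holds for every sample, hence also after integrating over the sample.
-/

open MeasureTheory Set Function Bornology

lemma update_dotProduct_update {κ R : Type*} [Fintype κ] [DecidableEq κ] [CommRing R]
    (s v : κ → R) (j : κ) (a x : R) :
    update s j a ⬝ᵥ update v j x = s ⬝ᵥ v - s j * v j + a * x := by
  simp only [dotProduct]
  rw [← Finset.add_sum_erase _ _ (Finset.mem_univ j),
    ← Finset.add_sum_erase _ _ (Finset.mem_univ j),
    Finset.sum_congr rfl fun i hi => by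
      rw [update_of_ne (Finset.ne_of_mem_erase hi), update_of_ne (Finset.ne_of_mem_erase hi)]]
  simp only [update_self]
  ring

lemma ciSup_add_add_ciSup_sub_le {T : Type*} [Nonempty T] {A F G : T → ℝ}
    (hadd : BddAbove (range fun t => A t + G t)) (hsub : BddAbove (range fun t => A t - G t))
    (hFG : ∀ t t', F t - F t' ≤ |G t - G t'|) :
    (⨆ t, A t + F t) + (⨆ t, A t - F t) ≤ (⨆ t, A t + G t) + ⨆ t, A t - G t := by
  refine ciSup_add_ciSup_le fun t t' => ?_
  have h := hFG t t'
  rcases le_total (G t') (G t) with hG | hG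
  · rw [abs_of_nonneg (sub_nonneg.2 hG)] at h
    calc A t + F t + (A t' - F t') ≤ (A t + G t) + (A t' - G t') := by linarith
      _ ≤ _ := add_le_add (le_ciSup hadd t) (le_ciSup hsub t')
  · rw [abs_of_nonpos (sub_nonpos.2 hG)] at h
    calc A t + F t + (A t' - F t') ≤ (A t' + G t') + (A t - G t) := by linarith
      _ ≤ _ := add_le_add (le_ciSup hadd t') (le_ciSup hsub t)

lemma lipschitzWith_one_abs : LipschitzWith 1 (abs : ℝ → ℝ) :=
  LipschitzWith.of_dist_le_mul fun x y => by
    simpa [Real.dist_eq] using abs_abs_sub_abs_le_abs_sub x y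

lemma ciSup_fin_succ {α : Type*} [ConditionallyCompleteLattice α] {k : ℕ} (a : Fin (k + 2) → α) :
    ⨆ i, a i = a 0 ⊔ ⨆ i : Fin (k + 1), a i.succ := by
  rw [← Finset.sup'_univ_eq_ciSup, ← Finset.sup'_univ_eq_ciSup,
    Finset.sup'_congr _ (Fin.univ_succ (k + 1)) (fun _ _ => rfl),
    Finset.sup'_cons (Finset.univ_nonempty.map), Finset.sup'_map]
  rfl

namespace Rademacher

variable {κ T : Type*}

def signVec (ε : κ → Bool) : κ → ℝ := fun j => if ε j then 1 else -1

lemma signVec_not (ε : κ → Bool) : signVec (not ∘ ε) = -signVec ε := by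
  ext j; cases h : ε j <;> simp [signVec, h]

lemma signVec_update [DecidableEq κ] (ε : κ → Bool) (j : κ) (b : Bool) :
    signVec (update ε j b) = update (signVec ε) j (if b then 1 else -1) := by
  ext i; rcases eq_or_ne i j with rfl | h <;> simp [signVec, *]

lemma abs_signVec (ε : κ → Bool) (j : κ) : |signVec ε j| = 1 := by
  cases h : ε j <;> simp [signVec, h]

lemma signVec_dotProduct_le [Fintype κ] {ε : κ → Bool} {v : κ → ℝ} {C : ℝ}
    (hv : ∀ j, |v j| ≤ C) : signVec ε ⬝ᵥ v ≤ Fintype.card κ * C := by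
  rw [← nsmul_eq_mul, ← Finset.card_univ, ← Finset.sum_const]
  refine Finset.sum_le_sum fun j _ => (le_abs_self _).trans ?_
  cases h : ε j <;> simpa [signVec, h] using hv j

variable [Fintype κ]

lemma isBounded_range_iff {f : T → κ → ℝ} :
    IsBounded (range f) ↔ ∃ C, ∀ t j, |f t j| ≤ C := by
  simp only [isBounded_iff_forall_norm_le, forall_mem_range]
  constructor
  · rintro ⟨C, hC⟩
    exact ⟨C, fun t j => (norm_le_pi_norm (f t) j).trans (hC t)⟩
  · rintro ⟨C, hC⟩
    exact ⟨max C 0, fun t => (pi_norm_le_iff_of_nonneg (le_max_right _ _)).2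
      fun j => (hC t j).trans (le_max_left _ _)⟩

lemma bddAbove_range_signVec_dotProduct {f : T → κ → ℝ} (hf : IsBounded (range f))
    (ε : κ → Bool) : BddAbove (range fun t => signVec ε ⬝ᵥ f t) := by
  obtain ⟨C, hC⟩ := isBounded_range_iff.1 hf
  exact ⟨_, forall_mem_range.2 fun t => signVec_dotProduct_le (hC t)⟩

lemma isBounded_range_comp_of_lipschitzWith {f : T → κ → ℝ} {φ : κ → ℝ → ℝ} {K : NNReal}
    (hφ : ∀ j, LipschitzWith K (φ j)) (hf : IsBounded (range f)) :
    IsBounded (range fun t j => φ j (f t j)) := by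
  obtain ⟨C, hC⟩ := isBounded_range_iff.1 hf
  refine isBounded_range_iff.2 ⟨∑ j, |φ j 0| + K * C, fun t j => ?_⟩
  have hLip := (hφ j).dist_le_mul (f t j) 0
  rw [Real.dist_eq, Real.dist_eq, sub_zero] at hLip
  calc |φ j (f t j)| ≤ |φ j 0| + K * |f t j| := by
        linarith [abs_sub_abs_le_abs_sub (φ j (f t j)) (φ j 0)]
    _ ≤ ∑ j, |φ j 0| + K * C := add_le_add
        (Finset.single_le_sum (fun i _ => abs_nonneg (φ i 0)) (Finset.mem_univ j))
        (mul_le_mul_of_nonneg_left (hC t j) K.coe_nonneg)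

lemma isBounded_range_add {f g : T → κ → ℝ} (hf : IsBounded (range f))
    (hg : IsBounded (range g)) : IsBounded (range (f + g)) :=
  (hf.add hg).subset <| range_subset_iff.2 fun t => add_mem_add ⟨t, rfl⟩ ⟨t, rfl⟩

lemma isBounded_range_sub {f g : T → κ → ℝ} (hf : IsBounded (range f))
    (hg : IsBounded (range g)) : IsBounded (range (f - g)) :=
  (hf.sub hg).subset <| range_subset_iff.2 fun t => sub_mem_sub ⟨t, rfl⟩ ⟨t, rfl⟩

lemma isBounded_range_neg {f : T → κ → ℝ} (hf : IsBounded (range f)) :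
    IsBounded (range (-f)) :=
  hf.neg.subset <| range_subset_iff.2 fun t => ⟨t, (neg_neg _).symm⟩

lemma isBounded_range_abs {f : T → κ → ℝ} (hf : IsBounded (range f)) :
    IsBounded (range |f|) :=
  isBounded_range_comp_of_lipschitzWith (φ := fun _ => abs) (fun _ => lipschitzWith_one_abs) hf

lemma isBounded_range_iSup {I : Type*} [Finite I] [Nonempty I] {ι : I → Type*}
    {w : ∀ i, ι i → κ → ℝ} (hw : ∀ i, IsBounded (range (w i))) :
    IsBounded (range fun (c : ∀ i, ι i) j => ⨆ i, w i (c i) j) := by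
  choose C hC using fun i => isBounded_range_iff.1 (hw i)
  obtain ⟨D, hD⟩ := (finite_range C).bddAbove
  have hle (c : ∀ i, ι i) (i : I) (j : κ) : |w i (c i) j| ≤ D := (hC i (c i) j).trans (hD ⟨i, rfl⟩)
  refine isBounded_range_iff.2 ⟨D, fun c j => abs_le.2 ⟨?_, ?_⟩⟩
  · obtain ⟨i⟩ := ‹Nonempty I›
    exact (abs_le.1 (hle c i j)).1.trans
      (le_ciSup (f := fun i => w i (c i) j) (finite_range _).bddAbove i)
  · exact ciSup_le fun i => (abs_le.1 (hle c i j)).2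

variable [DecidableEq κ]

-- `2 ^ n * n` times the empirical Rademacher complexity of the class `{f t}` on a sample of size
-- `n = card κ`, with `f t j` the value of the `t`-th function at the `j`-th sample point
noncomputable def radSum (f : T → κ → ℝ) : ℝ := ∑ ε : κ → Bool, ⨆ t, signVec ε ⬝ᵥ f t

lemma sum_comp_not (Φ : (κ → Bool) → ℝ) : ∑ ε, Φ (not ∘ ε) = ∑ ε, Φ ε :=
  Fintype.sum_equiv (Equiv.arrowCongr (Equiv.refl κ) Equiv.boolNot) _ _ fun _ => rfl

lemma sum_signVec_dotProduct (v : κ → ℝ) : ∑ ε : κ → Bool, signVec ε ⬝ᵥ v = 0 := by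
  have h := sum_comp_not fun ε => signVec ε ⬝ᵥ v
  simp only [signVec_not, neg_dotProduct, Finset.sum_neg_distrib] at h
  linarith

lemma isBounded_range_of_bddAbove {f : T → κ → ℝ}
    (hf : ∀ ε, BddAbove (range fun t => signVec ε ⬝ᵥ f t)) : IsBounded (range f) := by
  choose B hB using hf
  refine isBounded_range_iff.2 ⟨∑ ε, max 0 (B ε), fun t j => ?_⟩
  -- the sign pattern of `f t` turns the correlation into the ℓ¹ norm of `f t`
  let ε : κ → Bool := fun i => decide (0 ≤ f t i)
  have hε : signVec ε ⬝ᵥ f t = ∑ i, |f t i| := Finset.sum_congr rfl fun i _ => by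
    by_cases h : 0 ≤ f t i
    · simp [ε, signVec, h, abs_of_nonneg h]
    · simp [ε, signVec, h, abs_of_neg (not_le.1 h)]
  calc |f t j| ≤ ∑ i, |f t i| :=
        Finset.single_le_sum (fun i _ => abs_nonneg (f t i)) (Finset.mem_univ j)
    _ ≤ B ε := hε ▸ hB ε ⟨t, rfl⟩
    _ ≤ ∑ ε, max 0 (B ε) := (le_max_right _ _).trans <|
        Finset.single_le_sum (f := fun ε => max 0 (B ε)) (fun _ _ => le_max_left _ _)
          (Finset.mem_univ ε)

lemma radSum_comp_of_surjective {T' : Type*} (f : T → κ → ℝ) {e : T' → T}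
    (he : Surjective e) : radSum (f ∘ e) = radSum f :=
  Finset.sum_congr rfl fun ε _ => he.iSup_comp fun t => signVec ε ⬝ᵥ f t

lemma radSum_smul (f : T → κ → ℝ) {c : ℝ} (hc : 0 ≤ c) : radSum (c • f) = c * radSum f := by
  simp only [radSum, Finset.mul_sum, Real.mul_iSup_of_nonneg hc, Pi.smul_apply,
    dotProduct_smul, smul_eq_mul]

lemma radSum_neg (f : T → κ → ℝ) : radSum (-f) = radSum f := by
  rw [radSum, ← sum_comp_not]
  simp only [signVec_not, Pi.neg_apply, dotProduct_neg, neg_dotProduct, neg_neg, radSum]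

lemma radSum_add_le [Nonempty T] {f g : T → κ → ℝ} (hf : IsBounded (range f))
    (hg : IsBounded (range g)) : radSum (f + g) ≤ radSum f + radSum g := by
  rw [radSum, radSum, radSum, ← Finset.sum_add_distrib]
  gcongr with ε
  simp only [Pi.add_apply, dotProduct_add]
  exact ciSup_add_le_ciSup_add_ciSup (bddAbove_range_signVec_dotProduct hf ε)
    (bddAbove_range_signVec_dotProduct hg ε)

lemma radSum_nonneg [Nonempty T] {f : T → κ → ℝ} (hf : IsBounded (range f)) :
    0 ≤ radSum f := by
  obtain ⟨t⟩ := ‹Nonempty T›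
  rw [← sum_signVec_dotProduct (f t)]
  exact Finset.sum_le_sum fun ε _ => le_ciSup (bddAbove_range_signVec_dotProduct hf ε) t

theorem radSum_update_le [Nonempty T] {G : T → κ → ℝ} (hG : IsBounded (range G)) (j₀ : κ)
    {φ : T → ℝ} (hφ : ∀ t t', |φ t - φ t'| ≤ |G t j₀ - G t' j₀|) :
    radSum (fun t => update (G t) j₀ (φ t)) ≤ radSum G := by
  let flip : Equiv.Perm (κ → Bool) := Involutive.toPerm (fun ε => update ε j₀ (!ε j₀)) fun ε => by
    ext j; rcases eq_or_ne j j₀ with rfl | hj <;> simp [*]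
  -- pair each sign pattern with the one that differs from it exactly at `j₀`
  have hpair : ∀ H : T → κ → ℝ, 2 * radSum H =
      ∑ ε, ((⨆ t, signVec ε ⬝ᵥ H t) + ⨆ t, signVec (flip ε) ⬝ᵥ H t) := fun H => by
    rw [Finset.sum_add_distrib, Equiv.sum_comp flip fun ε => ⨆ t, signVec ε ⬝ᵥ H t, radSum]
    ring
  suffices key : ∀ ε : κ → Bool,
      (⨆ t, signVec ε ⬝ᵥ update (G t) j₀ (φ t)) + ⨆ t, signVec (flip ε) ⬝ᵥ update (G t) j₀ (φ t)
        ≤ (⨆ t, signVec ε ⬝ᵥ G t) + ⨆ t, signVec (flip ε) ⬝ᵥ G t by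
    have := Finset.sum_le_sum fun ε (_ : ε ∈ Finset.univ) => key ε
    rw [← hpair, ← hpair] at this
    linarith
  intro ε
  -- all four correlations below are `A t ± σ * (entry at j₀)` with the same `A`
  let σ := signVec ε j₀
  let A t := signVec ε ⬝ᵥ G t - σ * G t j₀
  have hflip : signVec (flip ε) = update (signVec ε) j₀ (-σ) := by
    rw [show flip ε = update ε j₀ (!ε j₀) from rfl, signVec_update]
    cases h : ε j₀ <;> simp [σ, signVec, h]
  have hupd : ∀ t a y, update (signVec ε) j₀ a ⬝ᵥ update (G t) j₀ y = A t + a * y :=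
    fun t a y => update_dotProduct_update _ _ _ _ _
  have e₁ : ∀ t, signVec ε ⬝ᵥ update (G t) j₀ (φ t) = A t + σ * φ t := fun t => by
    rw [← hupd, update_eq_self]
  have e₂ : ∀ t, signVec (flip ε) ⬝ᵥ update (G t) j₀ (φ t) = A t - σ * φ t := fun t => by
    rw [hflip, hupd]; ring
  have e₃ : ∀ t, signVec ε ⬝ᵥ G t = A t + σ * G t j₀ := fun t => by simp only [A]; ring
  have e₄ : ∀ t, signVec (flip ε) ⬝ᵥ G t = A t - σ * G t j₀ := fun t => by
    rw [hflip, ← update_eq_self j₀ (G t), hupd, update_self]; ring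
  have hσ : |σ| = 1 := abs_signVec ε j₀
  simp only [e₁, e₂]
  rw [iSup_congr e₃, iSup_congr e₄]
  refine ciSup_add_add_ciSup_sub_le ?_ ?_ fun t t' => ?_
  · simpa only [e₃] using bddAbove_range_signVec_dotProduct hG ε
  · simpa only [e₄] using bddAbove_range_signVec_dotProduct hG (flip ε)
  · calc σ * φ t - σ * φ t' ≤ |σ * (φ t - φ t')| := (le_abs_self _).trans_eq' (by ring)
      _ ≤ |σ * (G t j₀ - G t' j₀)| := by rw [abs_mul, abs_mul, hσ, one_mul, one_mul]; exact hφ t t'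
      _ = |σ * G t j₀ - σ * G t' j₀| := by rw [mul_sub]

theorem radSum_comp_le [Nonempty T] {f : T → κ → ℝ} (hf : IsBounded (range f))
    {φ : κ → ℝ → ℝ} (hφ : ∀ j, LipschitzWith 1 (φ j)) :
    radSum (fun t j => φ j (f t j)) ≤ radSum f := by
  let hybrid (S : Finset κ) : T → κ → ℝ := fun t j => (if j ∈ S then φ j else id) (f t j)
  have hbdd (S : Finset κ) : IsBounded (range (hybrid S)) :=
    isBounded_range_comp_of_lipschitzWith (fun j => by
      split_ifs
      exacts [hφ j, LipschitzWith.id]) hf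
  suffices ∀ S, radSum (hybrid S) ≤ radSum f by simpa [hybrid] using this Finset.univ
  intro S
  induction S using Finset.induction_on with
  | empty => simp [hybrid]
  | insert j₀ S hj₀ ih =>
    have hupd : hybrid (insert j₀ S) = fun t => update (hybrid S t) j₀ (φ j₀ (f t j₀)) := by
      ext t j
      rcases eq_or_ne j j₀ with rfl | hj <;> simp [hybrid, *]
    rw [hupd]
    refine (radSum_update_le (hbdd S) j₀ fun t t' => ?_).trans ih
    simpa [hybrid, hj₀, Real.dist_eq] using (hφ j₀).dist_le_mul (f t j₀) (f t' j₀)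

theorem radSum_abs_le [Nonempty T] {f : T → κ → ℝ} (hf : IsBounded (range f)) :
    radSum |f| ≤ radSum f :=
  radSum_comp_le (φ := fun _ => abs) hf fun _ => lipschitzWith_one_abs

theorem radSum_sup_le [Nonempty T] {U V : T → κ → ℝ} (hU : IsBounded (range U))
    (hV : IsBounded (range V)) : radSum (U ⊔ V) ≤ radSum U + radSum V := by
  have hVU := isBounded_range_sub hV hU
  have hsub : radSum (V - U) ≤ radSum V + radSum U := by
    simpa only [sub_eq_add_neg, radSum_neg] using radSum_add_le hV (isBounded_range_neg hU)
  calc radSum (U ⊔ V) = 2⁻¹ * radSum (U + V + |V - U|) := by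
        rw [sup_eq_half_smul_add_add_abs_sub' ℝ, radSum_smul _ (by norm_num)]
    _ ≤ 2⁻¹ * (radSum U + radSum V + (radSum V + radSum U)) := by
        gcongr
        calc _ ≤ radSum (U + V) + radSum |V - U| :=
              radSum_add_le (isBounded_range_add hU hV) (isBounded_range_abs hVU)
          _ ≤ _ := add_le_add (radSum_add_le hU hV) ((radSum_abs_le hVU).trans hsub)
    _ = radSum U + radSum V := by ring

theorem radSum_iSup_le {k : ℕ} {ι : Fin (k + 1) → Type*} [∀ i, Nonempty (ι i)]
    (w : ∀ i, ι i → κ → ℝ) (hw : ∀ i, IsBounded (range (w i))) :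
    radSum (fun (c : ∀ i, ι i) j => ⨆ i, w i (c i) j) ≤ ∑ i, radSum (w i) := by
  induction k with
  | zero =>
    rw [Fin.sum_univ_one, ← radSum_comp_of_surjective (w 0) (surjective_eval 0)]
    exact le_of_eq (congrArg radSum (funext fun c => funext fun j =>
      ciSup_unique (s := fun i : Fin 1 => w i (c i) j)))
  | succ k ih =>
    let V (b : ∀ i : Fin (k + 1), ι i.succ) (j : κ) : ℝ := ⨆ i, w i.succ (b i) j
    have hsplit :
        (fun (c : ∀ i, ι i) j => ⨆ i, w i (c i) j) = (w 0 ∘ eval 0) ⊔ (V ∘ Fin.tail) := by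
      ext c j
      exact ciSup_fin_succ _
    have htail : Surjective (Fin.tail : (∀ i, ι i) → _) := fun b =>
      ⟨Fin.cons (Classical.arbitrary _) b, Fin.tail_cons _ _⟩
    have hV : IsBounded (range V) := isBounded_range_iSup fun i => hw i.succ
    rw [hsplit, Fin.sum_univ_succ]
    calc _ ≤ radSum (w 0 ∘ eval 0) + radSum (V ∘ Fin.tail) :=
          radSum_sup_le ((hw 0).subset (range_comp_subset_range _ _))
            (hV.subset (range_comp_subset_range _ _))
      _ ≤ radSum (w 0) + ∑ i : Fin (k + 1), radSum (w i.succ) := by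
          rw [radSum_comp_of_surjective _ (surjective_eval 0), radSum_comp_of_surjective _ htail]
          exact add_le_add le_rfl (ih (fun i => w i.succ) fun i => hw i.succ)

lemma isBounded_range_of_bddAbove_div {f : T → κ → ℝ} {c : ℝ} (hc : 0 < c)
    (hf : ∀ ε : κ → Bool,
      BddAbove (range fun t => (∑ j, (if ε j then (1 : ℝ) else -1) * f t j) / c)) :
    IsBounded (range f) :=
  isBounded_range_of_bddAbove fun ε => by
    obtain ⟨B, hB⟩ := hf ε
    exact ⟨B * c, forall_mem_range.2 fun t => (div_le_iff₀ hc).1 (hB ⟨t, rfl⟩)⟩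

lemma sum_ciSup_div_eq_radSum_div (f : T → κ → ℝ) {c : ℝ} (hc : 0 ≤ c) :
    ∑ ε : κ → Bool, ⨆ t, (∑ j, (if ε j then (1 : ℝ) else -1) * f t j) / c = radSum f / c := by
  simp only [div_eq_mul_inv, ← Real.iSup_mul_of_nonneg (inv_nonneg.2 hc), ← Finset.sum_mul]
  rfl

end Rademacher

open Rademacher in
theorem rademacher_max_le_sum_general
    {X : Type*} [MeasurableSpace X] (P : Measure X)
    (n : ℕ) (hn : 0 < n) (m : ℕ) [NeZero m]
    (ι : Fin m → Type*) [∀ i, Nonempty (ι i)]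
    (g : ∀ i : Fin m, ι i → X → ℝ)
    (hbddF : ∀ (i : Fin m) (x : Fin n → X) (ε : Fin n → Bool),
      BddAbove (Set.range fun a : ι i =>
        (∑ j : Fin n, (if ε j then (1 : ℝ) else -1) * g i a (x j)) / n))
    (hintF : ∀ i : Fin m, Integrable
      (fun x : Fin n → X =>
        (∑ ε : Fin n → Bool, ⨆ a : ι i,
          (∑ j : Fin n, (if ε j then (1 : ℝ) else -1) * g i a (x j)) / n) / 2 ^ n)
      (Measure.pi fun _ : Fin n => P)) :
    ∫ x, (∑ ε : Fin n → Bool, ⨆ c : (∀ i, ι i),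
        (∑ j : Fin n, (if ε j then (1 : ℝ) else -1) *
          (⨆ i : Fin m, g i (c i) (x j))) / n) / 2 ^ n
      ∂(Measure.pi fun _ : Fin n => P)
    ≤ ∑ i : Fin m, ∫ x, (∑ ε : Fin n → Bool, ⨆ a : ι i,
        (∑ j : Fin n, (if ε j then (1 : ℝ) else -1) * g i a (x j)) / n) / 2 ^ n
      ∂(Measure.pi fun _ : Fin n => P) := by
  obtain ⟨k, rfl⟩ : ∃ k, m = k + 1 := Nat.exists_eq_succ_of_ne_zero (NeZero.ne m)
  have hw (x : Fin n → X) (i : Fin (k + 1)) : IsBounded (range fun a j => g i a (x j)) :=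
    isBounded_range_of_bddAbove_div (Nat.cast_pos.2 hn) (hbddF i x)
  have hint := fun i (_ : i ∈ Finset.univ) => hintF i
  rw [← integral_finsetSum _ hint]
  refine integral_mono_of_nonneg (ae_of_all _ fun x => ?_) (integrable_finsetSum _ hint)
    (ae_of_all _ fun x => ?_)
  · have := radSum_nonneg (isBounded_range_iSup (hw x))
    simp only [Pi.zero_apply, sum_ciSup_div_eq_radSum_div _ n.cast_nonneg]
    positivity
  · simp only [sum_ciSup_div_eq_radSum_div _ n.cast_nonneg, ← Finset.sum_div]
    gcongr
    exact radSum_iSup_le (fun i a j => g i a (x j)) (hw x)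

/-- **Rademacher complexity of a max of classes**: if `M` is the class of
pointwise maxima `x ↦ max(f₁ x, …, f_m x)` with `f_i` ranging over class
`F_i` (indexed by `ι i`), then `R_n(M) ≤ ∑ᵢ R_n(F_i)`, where
`R_n(F) = E_{x,ε} sup_{f∈F} (1/n) ∑ⱼ εⱼ f (xⱼ)` (the Rademacher expectation is
written as an average over sign patterns `ε : Fin n → Bool`). -/
theorem rademacher_max_le_sum
    {X : Type*} [MeasurableSpace X] (P : Measure X) [IsProbabilityMeasure P]
    (n : ℕ) (hn : 0 < n) (m : ℕ) [NeZero m]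
    (ι : Fin m → Type*) [∀ i, Nonempty (ι i)]
    (g : ∀ i : Fin m, ι i → X → ℝ)
    (hbddM : ∀ (x : Fin n → X) (ε : Fin n → Bool),
      BddAbove (Set.range fun c : (∀ i, ι i) =>
        (∑ j : Fin n, (if ε j then (1 : ℝ) else -1) * (⨆ i : Fin m, g i (c i) (x j))) / n))
    (hbddF : ∀ (i : Fin m) (x : Fin n → X) (ε : Fin n → Bool),
      BddAbove (Set.range fun a : ι i =>
        (∑ j : Fin n, (if ε j then (1 : ℝ) else -1) * g i a (x j)) / n))
    (hintM : Integrable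
      (fun x : Fin n → X =>
        (∑ ε : Fin n → Bool, ⨆ c : (∀ i, ι i),
          (∑ j : Fin n, (if ε j then (1 : ℝ) else -1) *
            (⨆ i : Fin m, g i (c i) (x j))) / n) / 2 ^ n)
      (Measure.pi fun _ : Fin n => P))
    (hintF : ∀ i : Fin m, Integrable
      (fun x : Fin n → X =>
        (∑ ε : Fin n → Bool, ⨆ a : ι i,
          (∑ j : Fin n, (if ε j then (1 : ℝ) else -1) * g i a (x j)) / n) / 2 ^ n)
      (Measure.pi fun _ : Fin n => P)) :
    ∫ x, (∑ ε : Fin n → Bool, ⨆ c : (∀ i, ι i),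
        (∑ j : Fin n, (if ε j then (1 : ℝ) else -1) *
          (⨆ i : Fin m, g i (c i) (x j))) / n) / 2 ^ n
      ∂(Measure.pi fun _ : Fin n => P)
    ≤ ∑ i : Fin m, ∫ x, (∑ ε : Fin n → Bool, ⨆ a : ι i,
        (∑ j : Fin n, (if ε j then (1 : ℝ) else -1) * g i a (x j)) / n) / 2 ^ n
      ∂(Measure.pi fun _ : Fin n => P) :=
  rademacher_max_le_sum_general P n hn m ι g hbddF hintF
end

section
/- (Multiclass one-hot decomposition bound) Let F be a symmetric class of functions f : X → ℝ^K (i.e., coordinate classes are symmetric), and define G = { (x,y) ↦ [f(x)]_y : f ∈ F } on X × {1,…,K}. Then for any fixed labeled sample (x_i, y_i)_{i=1}^n, E_ε sup_{g∈G} Σ_i ε_i g(x_i, y_i) ≤ K · max_{1≤y≤K} E_ε sup_{f∈F} Σ_i ε_i [f(x_i)]_y. -/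
/-- **Multiclass one-hot decomposition bound**: for a symmetric class `F` of
vector-valued functions `f : X → ℝ^K` and the induced class
`G = {(x,y) ↦ [f x]_y}`, one has
`E_ε sup_{g∈G} ∑ᵢ εᵢ g(xᵢ,yᵢ) ≤ K · max_y E_ε sup_{f∈F} ∑ᵢ εᵢ [f xᵢ]_y`.
The Rademacher expectation is written as an average over `ε : Fin n → Bool`. -/
theorem multiclass_onehot_rademacher_bound
    {X : Type*} (n K : ℕ) [NeZero K]
    (F : Set (X → Fin K → ℝ)) (hne : F.Nonempty)
    (hsym : ∀ f ∈ F, (fun x k => -(f x k)) ∈ F)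
    (x : Fin n → X) (y : Fin n → Fin K)
    (hbddG : ∀ ε : Fin n → Bool,
      BddAbove ((fun f : X → Fin K → ℝ =>
        ∑ i : Fin n, (if ε i then (1 : ℝ) else -1) * f (x i) (y i)) '' F))
    (hbddF : ∀ (k : Fin K) (ε : Fin n → Bool),
      BddAbove ((fun f : X → Fin K → ℝ =>
        ∑ i : Fin n, (if ε i then (1 : ℝ) else -1) * f (x i) k) '' F)) :
    (∑ ε : Fin n → Bool, sSup ((fun f : X → Fin K → ℝ =>
        ∑ i : Fin n, (if ε i then (1 : ℝ) else -1) * f (x i) (y i)) '' F)) / 2 ^ n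
      ≤ K * ⨆ k : Fin K,
        (∑ ε : Fin n → Bool, sSup ((fun f : X → Fin K → ℝ =>
          ∑ i : Fin n, (if ε i then (1 : ℝ) else -1) * f (x i) k) '' F)) / 2 ^ n := by
  classical
  -- abbreviations
  set sgn : (Fin n → Bool) → Fin n → ℝ := fun ε i => if ε i then (1 : ℝ) else -1 with hsgn
  set Φ : (Fin n → Bool) → (X → Fin K → ℝ) → ℝ :=
    fun ε f => ∑ i : Fin n, sgn ε i * f (x i) (y i) with hΦ
  set Ψ : Fin K → (Fin n → Bool) → (X → Fin K → ℝ) → ℝ :=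
    fun k ε f => ∑ i : Fin n, sgn ε i * f (x i) k with hΨ
  set M : Fin K → (Fin n → Bool) → (X → Fin K → ℝ) → ℝ :=
    fun k ε f => ∑ i : Fin n, if y i = k then sgn ε i * f (x i) k else 0 with hM
  set fl : Fin K → (Fin n → Bool) → (Fin n → Bool) :=
    fun k ε i => if y i = k then ε i else !(ε i) with hfl
  have hflinv : ∀ k ε, fl k (fl k ε) = ε := by
    intro k ε; funext i; simp [hfl]; split <;> simp
  have hflbij : ∀ k, Function.Bijective (fl k) := by
    intro k
    exact Function.Involutive.bijective (fun ε => hflinv k ε)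
  -- M as average
  have hMavg : ∀ k ε f, M k ε f = (Ψ k ε f + Ψ k (fl k ε) f) / 2 := by
    intro k ε f
    have key : Ψ k ε f + Ψ k (fl k ε) f = 2 * M k ε f := by
      simp only [hΨ, hM, Finset.mul_sum, ← Finset.sum_add_distrib]
      refine Finset.sum_congr rfl fun i _ => ?_
      by_cases h : y i = k
      · simp only [hfl, hsgn, if_pos h]
        ring
      · simp only [hfl, hsgn, if_neg h, mul_zero]
        cases hε : ε i <;> simp <;> ring
    linarith
  -- boundedness of masked class and sSup bound
  have hMbdd : ∀ k ε, BddAbove (M k ε '' F) := by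
    intro k ε
    refine ⟨(sSup (Ψ k ε '' F) + sSup (Ψ k (fl k ε) '' F)) / 2, ?_⟩
    rintro _ ⟨f, hf, rfl⟩
    rw [hMavg]
    have h1 : Ψ k ε f ≤ sSup (Ψ k ε '' F) := le_csSup (hbddF k ε) ⟨f, hf, rfl⟩
    have h2 : Ψ k (fl k ε) f ≤ sSup (Ψ k (fl k ε) '' F) :=
      le_csSup (hbddF k (fl k ε)) ⟨f, hf, rfl⟩
    linarith
  have hMsSup : ∀ k ε, sSup (M k ε '' F) ≤
      (sSup (Ψ k ε '' F) + sSup (Ψ k (fl k ε) '' F)) / 2 := by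
    intro k ε
    refine csSup_le (hne.image _) ?_
    rintro _ ⟨f, hf, rfl⟩
    rw [hMavg]
    have h1 : Ψ k ε f ≤ sSup (Ψ k ε '' F) := le_csSup (hbddF k ε) ⟨f, hf, rfl⟩
    have h2 : Ψ k (fl k ε) f ≤ sSup (Ψ k (fl k ε) '' F) :=
      le_csSup (hbddF k (fl k ε)) ⟨f, hf, rfl⟩
    linarith
  -- decomposition Φ = ∑ k, M k
  have hdecomp : ∀ ε f, Φ ε f = ∑ k : Fin K, M k ε f := by
    intro ε f
    simp only [hM, hΦ]
    rw [Finset.sum_comm]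
    refine Finset.sum_congr rfl fun i _ => ?_
    simp [Finset.sum_ite_eq]
  -- sup of Φ bounded by sum of masked sups
  have hΦsSup : ∀ ε, sSup (Φ ε '' F) ≤ ∑ k : Fin K, sSup (M k ε '' F) := by
    intro ε
    refine csSup_le (hne.image _) ?_
    rintro _ ⟨f, hf, rfl⟩
    rw [hdecomp]
    exact Finset.sum_le_sum fun k _ => le_csSup (hMbdd k ε) ⟨f, hf, rfl⟩
  -- sum over ε of masked sups ≤ sum over ε of full sups, via the flip bijection
  have hmask : ∀ k, (∑ ε : Fin n → Bool, sSup (M k ε '' F)) ≤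
      ∑ ε : Fin n → Bool, sSup (Ψ k ε '' F) := by
    intro k
    calc (∑ ε : Fin n → Bool, sSup (M k ε '' F))
        ≤ ∑ ε : Fin n → Bool,
            (sSup (Ψ k ε '' F) + sSup (Ψ k (fl k ε) '' F)) / 2 :=
          Finset.sum_le_sum fun ε _ => hMsSup k ε
      _ = ((∑ ε : Fin n → Bool, sSup (Ψ k ε '' F)) +
            ∑ ε : Fin n → Bool, sSup (Ψ k (fl k ε) '' F)) / 2 := by
          rw [← Finset.sum_add_distrib, Finset.sum_div]
      _ = ∑ ε : Fin n → Bool, sSup (Ψ k ε '' F) := by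
          rw [Fintype.sum_bijective (fl k) (hflbij k)
            (fun ε => sSup (Ψ k (fl k ε) '' F)) (fun ε => sSup (Ψ k ε '' F))
            (fun ε => rfl)]
          ring
  -- put it together
  have hmain : (∑ ε : Fin n → Bool, sSup (Φ ε '' F)) ≤
      ∑ k : Fin K, ∑ ε : Fin n → Bool, sSup (Ψ k ε '' F) := by
    calc (∑ ε : Fin n → Bool, sSup (Φ ε '' F))
        ≤ ∑ ε : Fin n → Bool, ∑ k : Fin K, sSup (M k ε '' F) :=
          Finset.sum_le_sum fun ε _ => hΦsSup ε
      _ = ∑ k : Fin K, ∑ ε : Fin n → Bool, sSup (M k ε '' F) := Finset.sum_comm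
      _ ≤ ∑ k : Fin K, ∑ ε : Fin n → Bool, sSup (Ψ k ε '' F) :=
          Finset.sum_le_sum fun k _ => hmask k
  have h2n : (0:ℝ) < 2 ^ n := by positivity
  have hsupbdd : BddAbove (Set.range fun k : Fin K =>
      (∑ ε : Fin n → Bool, sSup (Ψ k ε '' F)) / 2 ^ n) :=
    (Set.finite_range _).bddAbove
  calc (∑ ε : Fin n → Bool, sSup (Φ ε '' F)) / 2 ^ n
      ≤ (∑ k : Fin K, ∑ ε : Fin n → Bool, sSup (Ψ k ε '' F)) / 2 ^ n :=
        by gcongr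
    _ ≤ K * ⨆ k : Fin K, (∑ ε : Fin n → Bool, sSup (Ψ k ε '' F)) / 2 ^ n := by
        rw [Finset.sum_div]
        have : ∀ k : Fin K, (∑ ε : Fin n → Bool, sSup (Ψ k ε '' F)) / 2 ^ n ≤
            ⨆ k : Fin K, (∑ ε : Fin n → Bool, sSup (Ψ k ε '' F)) / 2 ^ n :=
          fun k => le_ciSup hsupbdd k
        calc ∑ k : Fin K, (∑ ε : Fin n → Bool, sSup (Ψ k ε '' F)) / 2 ^ n
            ≤ ∑ _k : Fin K, ⨆ k : Fin K,
                (∑ ε : Fin n → Bool, sSup (Ψ k ε '' F)) / 2 ^ n :=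
              Finset.sum_le_sum fun k _ => this k
          _ = K * ⨆ k : Fin K, (∑ ε : Fin n → Bool, sSup (Ψ k ε '' F)) / 2 ^ n := by
              simp [Finset.sum_const, Finset.card_univ, nsmul_eq_mul]
end
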